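/- Let F be a field, R the ring of ternions over F, and n ≥ 1. A subset of F^{n+1} is a 1-dimensional F-linear subspace if and only if it is the image, under the coordinate bijection (rad R)^{n+1} → F^{n+1}, of the intersection M ∩ (rad R)^{n+1} for some unimodular free cyclic submodule M of R^{n+1} (i.e., a free cyclic submodule generated by a unimodular vector). -/

import Mathlib

set_option synthInstance.maxHeartbeats 1000000
set_option maxHeartbeats 1000000

/-- The ring of ternions over a field `F`: the subring of `2×2` matrices over `F`
consisting of all upper triangular matrices. -/
def ternions (F : Type) [Field F] : Subring (Matrix (Fin 2) (Fin 2) F) where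
  carrier := {A | A 1 0 = 0}
  zero_mem' := by simp
  one_mem' := by simp [Matrix.one_apply]
  add_mem' := by
    intro a b ha hb
    simp only [Set.mem_setOf_eq, Matrix.add_apply] at *
    simp [ha, hb]
  neg_mem' := by
    intro a ha
    simp only [Set.mem_setOf_eq, Matrix.neg_apply] at *
    simp [ha]
  mul_mem' := by
    intro a b ha hb
    simp only [Set.mem_setOf_eq, Matrix.mul_apply, Fin.sum_univ_two] at *
    simp [ha, hb]

/-!
The two diagonal entries of a ternion are ring homomorphisms to `F`, so a unimodular `X`
has a coordinate with nonzero upper-left entry and one with nonzero lower-right entry.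
The first forces every radical multiple `r • X` to have `r₀₀ = 0`, so its radical
coordinates are `r₀₁ • w` with `w` the vector of lower-right entries of `X`, which is nonzero
by the second: the trace is the line `F w`. Conversely, the line `F w` is the trace of `w`
read as scalar ternions; a nonzero coordinate is a unit, so this `X` is unimodular, and
unimodular vectors generate free cyclic modules since `φ (r • X) = r`.
-/

section Unimodular

variable {R : Type*} [Semiring R] {M : Type*} [AddCommMonoid M] [Module R M]

theorem smul_left_injective_of_linearMap_eq_one {φ : M →ₗ[R] R} {x : M} (hφ : φ x = 1) :
    Function.Injective (fun r : R => r • x) := fun a b h => by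
  simpa [hφ] using congrArg φ h

variable {ι : Type*}

theorem exists_linearMap_eq_one_of_isUnit_apply {X : ι → R} {j : ι} (hj : IsUnit (X j)) :
    ∃ φ : (ι → R) →ₗ[R] R, φ X = 1 :=
  ⟨LinearMap.toSpanSingleton R R ↑hj.unit⁻¹ ∘ₗ LinearMap.proj j, hj.mul_val_inv⟩

theorem exists_map_apply_ne_zero_of_linearMap_eq_one [Fintype ι]
    {S : Type*} [Semiring S] [Nontrivial S] (f : R →+* S) {X : ι → R}
    {φ : (ι → R) →ₗ[R] R} (hφ : φ X = 1) : ∃ i, f (X i) ≠ 0 := by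
  classical
  by_contra! h
  have : f (φ X) = 0 := by
    simp [LinearMap.pi_apply_eq_sum_univ φ X, h]
  simp [hφ] at this

end Unimodular

namespace ternions

variable {F : Type} [Field F]

def mk (a b c : F) : ternions F := ⟨!![a, b; 0, c], rfl⟩

@[simp] lemma mk_val_zero_zero (a b c : F) : (mk a b c).val 0 0 = a := rfl
@[simp] lemma mk_val_zero_one (a b c : F) : (mk a b c).val 0 1 = b := rfl
@[simp] lemma mk_val_one_one (a b c : F) : (mk a b c).val 1 1 = c := rfl

lemma val_one_zero (x : ternions F) : x.val 1 0 = 0 := x.2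

lemma mul_val_diag (x y : ternions F) (i : Fin 2) :
    (x * y).val i i = x.val i i * y.val i i := by
  fin_cases i <;> simp [Matrix.mul_apply, Fin.sum_univ_two, val_one_zero]

lemma mul_val_zero_one (x y : ternions F) :
    (x * y).val 0 1 = x.val 0 0 * y.val 0 1 + x.val 0 1 * y.val 1 1 := by
  simp [Matrix.mul_apply, Fin.sum_univ_two]

def diag (i : Fin 2) : ternions F →+* F where
  toFun x := x.val i i
  map_one' := by simp
  map_mul' x y := mul_val_diag x y i
  map_zero' := rfl
  map_add' _ _ := rfl

def scalar : F →+* ternions F :=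
  (Matrix.scalar (Fin 2)).codRestrict (ternions F) fun _ => by
    show Matrix.scalar (Fin 2) _ 1 0 = 0
    simp

@[simp] lemma scalar_val (a : F) (i : Fin 2) : (scalar a).val i i = a := by
  simp [scalar]

variable {ι : Type*}

def radTrace (X : ι → ternions F) : Set (ι → F) :=
  (fun v : ι → ternions F => fun i => (v i).val 0 1) ''
    {v | v ∈ Submodule.span (ternions F) {X} ∧ ∀ i, (v i).val 0 0 = 0 ∧ (v i).val 1 1 = 0}

theorem radTrace_eq_span {X : ι → ternions F} {i₀ : ι} (hi₀ : (X i₀).val 0 0 ≠ 0) :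
    radTrace X = Submodule.span F {fun i => (X i).val 1 1} := by
  ext x
  simp only [radTrace, Set.mem_image, Set.mem_ofPred_eq, SetLike.mem_coe,
    Submodule.mem_span_singleton]
  constructor
  · rintro ⟨_, ⟨⟨r, rfl⟩, hrad⟩, rfl⟩
    have hr : r.val 0 0 = 0 := by
      have := (hrad i₀).1
      rw [Pi.smul_apply, smul_eq_mul, mul_val_diag] at this
      exact (mul_eq_zero.mp this).resolve_right hi₀
    exact ⟨r.val 0 1, funext fun i => by simp [mul_val_zero_one, hr]⟩
  · rintro ⟨q, rfl⟩
    refine ⟨mk 0 q 0 • X, ⟨⟨_, rfl⟩, fun i => ?_⟩, funext fun i => ?_⟩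
    · simp [mul_val_diag]
    · simp [mul_val_zero_one]

end ternions

open ternions in
theorem ternion_point_iff_trace_of_unimodular_free_general (F : Type) [Field F] (n : ℕ)
    (S : Set (Fin (n + 1) → F)) :
    (∃ W : Submodule F (Fin (n + 1) → F), Module.finrank F W = 1 ∧
        (W : Set (Fin (n + 1) → F)) = S) ↔
      ∃ X : Fin (n + 1) → ternions F,
        Function.Injective (fun r : ternions F => r • X) ∧
        (∃ φ : (Fin (n + 1) → ternions F) →ₗ[ternions F] ternions F, φ X = 1) ∧
        S = (fun v : Fin (n + 1) → ternions F => fun i => (v i).val 0 1) ''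
          {v : Fin (n + 1) → ternions F | v ∈ Submodule.span (ternions F) {X} ∧
            ∀ i, (v i).val 0 0 = 0 ∧ (v i).val 1 1 = 0} := by
  constructor
  · rintro ⟨W, hW, rfl⟩
    obtain ⟨⟨w, hwW⟩, hw0, -⟩ := finrank_eq_one_iff'.mp hW
    have hw : w ≠ 0 := by simpa using hw0
    obtain ⟨j, hj⟩ := Function.ne_iff.mp hw
    obtain ⟨φ, hφ⟩ := exists_linearMap_eq_one_of_isUnit_apply
      (X := fun i => scalar (w i)) ((isUnit_iff_ne_zero.mpr hj).map scalar)
    refine ⟨_, smul_left_injective_of_linearMap_eq_one hφ, ⟨φ, hφ⟩, ?_⟩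
    change _ = radTrace _
    rw [radTrace_eq_span (i₀ := j) (by simpa using hj)]
    simp only [scalar_val]
    rw [eq_span_singleton_of_mem_of_finrank_eq_one hW hwW hw]
  · rintro ⟨X, -, ⟨φ, hφ⟩, rfl⟩
    obtain ⟨i₀, hi₀⟩ := exists_map_apply_ne_zero_of_linearMap_eq_one (diag 0) hφ
    obtain ⟨j, hj⟩ := exists_map_apply_ne_zero_of_linearMap_eq_one (diag 1) hφ
    have hw : (fun i => (X i).val 1 1) ≠ 0 := Function.ne_iff.mpr ⟨j, hj⟩
    exact ⟨_, finrank_span_singleton hw, (radTrace_eq_span hi₀).symm⟩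

/-- A subset of `F^{n+1}` is a `1`-dimensional `F`-linear subspace if and only if it is
the image, under the coordinate bijection `(rad R)^{n+1} → F^{n+1}`, of the intersection
`M ∩ (rad R)^{n+1}` for some unimodular free cyclic submodule `M = R·X` of `R^{n+1}`. -/
theorem ternion_point_iff_trace_of_unimodular_free (F : Type) [Field F] (n : ℕ)
    (hn : 1 ≤ n) (S : Set (Fin (n + 1) → F)) :
    (∃ W : Submodule F (Fin (n + 1) → F), Module.finrank F W = 1 ∧
        (W : Set (Fin (n + 1) → F)) = S) ↔
      ∃ X : Fin (n + 1) → ternions F,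
        Function.Injective (fun r : ternions F => r • X) ∧
        (∃ φ : (Fin (n + 1) → ternions F) →ₗ[ternions F] ternions F, φ X = 1) ∧
        S = (fun v : Fin (n + 1) → ternions F => fun i => (v i).val 0 1) ''
          {v : Fin (n + 1) → ternions F | v ∈ Submodule.span (ternions F) {X} ∧
            ∀ i, (v i).val 0 0 = 0 ∧ (v i).val 1 1 = 0} :=
  ternion_point_iff_trace_of_unimodular_free_general F n S
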